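/- arXiv:2003.13061 — 4 statements merged into one kernel-verified Lean document; each statement's English description precedes it below -/
import Mathlib

section
/- A relative ideal I of a numerical semigroup S is almost canonical if and only if Ĩ − M = K − M. -/
open Set Pointwise

def IsNumSgrp (S : Set ℤ) : Prop :=
  0 ∈ S ∧ (∀ a ∈ S, ∀ b ∈ S, a + b ∈ S) ∧ (∀ a ∈ S, 0 ≤ a) ∧ ∃ c : ℤ, ∀ z, c ≤ z → z ∈ S

def maxId (S : Set ℤ) : Set ℤ := S \ {0}

def subI (I J : Set ℤ) : Set ℤ := {x : ℤ | ∀ j ∈ J, x + j ∈ I}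

def PF (S I : Set ℤ) : Set ℤ := subI I (maxId S) \ I

def stdK (S : Set ℤ) (F : ℤ) : Set ℤ := {x : ℤ | 0 ≤ x ∧ F - x ∉ S}

def IsFrobOf (I : Set ℤ) (FI : ℤ) : Prop := FI ∉ I ∧ ∀ z : ℤ, FI < z → z ∈ I

def IsRelIdeal (S I : Set ℤ) : Prop :=
  I.Nonempty ∧ (∀ i ∈ I, ∀ s ∈ S, i + s ∈ I) ∧ ∃ z ∈ S, ∀ i ∈ I, z + i ∈ S

def tilde (I : Set ℤ) (d : ℤ) : Set ℤ := (fun x => x + d) '' I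

def IsAlmostCanonical (S : Set ℤ) (F : ℤ) (I : Set ℤ) : Prop :=
  ∃ FI : ℤ, IsFrobOf I FI ∧ subI (tilde I (F - FI)) (maxId S) = stdK S F ∪ {F}

def IsMinGen (S : Set ℤ) (x : ℤ) : Prop := x ∈ maxId S \ (maxId S + maxId S)

def IsMult (S : Set ℤ) (e : ℤ) : Prop := e ∈ maxId S ∧ ∀ m ∈ maxId S, e ≤ m

def genK (S : Set ℤ) (F : ℤ) : Set ℤ := (AddSubmonoid.closure (stdK S F) : Set ℤ)

def nK (K : Set ℤ) : ℕ → Set ℤ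
  | 0 => {0}
  | 1 => K
  | n + 2 => nK K (n + 1) + K

def IsGAS (S : Set ℤ) (F : ℤ) : Prop :=
  stdK S F + stdK S F = stdK S F ∨
  ∃ X : Finset ℤ, (∀ x ∈ X, IsMinGen S x) ∧ (∀ x ∈ X, ∀ y ∈ X, x - y ∉ PF S S) ∧
    (stdK S F + stdK S F) \ stdK S F = (fun x => F - x) '' (X : Set ℤ) ∪ {F}

def IsAlmostSym (S : Set ℤ) (F : ℤ) : Prop := subI S (maxId S) = stdK S F ∪ {F}

def apery (I : Set ℤ) (e : ℤ) : Set ℤ := {i ∈ I | i - e ∉ I}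

/-! The canonical ideal satisfies `K - M = K ∪ {F}`: an element `x ≠ F` of `K - M` lies in `K`,
since otherwise `F - x ∈ M` and `x + (F - x) = F ∉ K`. Hence "almost canonical", i.e.
`Ĩ - M = K ∪ {F}`, says exactly `Ĩ - M = K - M`, the Frobenius number of `I` being unique. -/

theorem IsFrobOf.unique {I : Set ℤ} {a b : ℤ} (ha : IsFrobOf I a) (hb : IsFrobOf I b) : a = b := by
  rcases lt_trichotomy a b with h | h | h
  · exact absurd (ha.2 b h) hb.1
  · exact h
  · exact absurd (hb.2 a h) ha.1

theorem IsFrobOf.neg_one_le {S : Set ℤ} {F : ℤ} (hpos : ∀ a ∈ S, 0 ≤ a) (hF : IsFrobOf S F) :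
    -1 ≤ F := by
  by_contra! h
  linarith [hpos _ (hF.2 (-1) h)]

theorem subI_stdK_maxId {S : Set ℤ} {F : ℤ} (h0 : 0 ∈ S) (hadd : ∀ a ∈ S, ∀ b ∈ S, a + b ∈ S)
    (hpos : ∀ a ∈ S, 0 ≤ a) (hF : IsFrobOf S F) :
    subI (stdK S F) (maxId S) = stdK S F ∪ {F} := by
  ext x
  constructor
  · intro hx
    by_cases hxF : x = F
    · exact Or.inr hxF
    have hFx : F - x ∉ maxId S := fun hm => by
      have h := (hx _ hm).2
      rw [show F - (x + (F - x)) = 0 by ring] at h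
      exact h h0
    have hFxS : F - x ∉ S := fun hS => hFx ⟨hS, sub_ne_zero.mpr (Ne.symm hxF)⟩
    refine Or.inl ⟨?_, hFxS⟩
    by_contra! hneg
    exact hFxS (hF.2 _ (by linarith))
  · rintro (hx | rfl) m ⟨hmS, hm0⟩
    · have hm : 0 ≤ m := hpos m hmS
      refine ⟨by linarith [hx.1], fun h => hx.2 ?_⟩
      have h' := hadd _ h _ hmS
      rwa [show F - (x + m) + m = F - x by ring] at h'
    · have hm : 0 < m := lt_of_le_of_ne (hpos m hmS) (Ne.symm hm0)
      refine ⟨by linarith [hF.neg_one_le hpos], fun h => ?_⟩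
      linarith [hpos _ h]

theorem stmt4_general (S : Set ℤ) (hS : IsNumSgrp S) (F : ℤ) (hF : IsFrobOf S F)
    (I : Set ℤ) (FI : ℤ) (hFI : IsFrobOf I FI) :
    IsAlmostCanonical S F I ↔
      subI (tilde I (F - FI)) (maxId S) = subI (stdK S F) (maxId S) := by
  obtain ⟨h0, hadd, hpos, -⟩ := hS
  rw [subI_stdK_maxId h0 hadd hpos hF]
  constructor
  · rintro ⟨FI', hFI', h⟩
    rwa [hFI'.unique hFI] at h
  · exact fun h => ⟨FI, hFI, h⟩

theorem stmt4 (S : Set ℤ) (hS : IsNumSgrp S) (F : ℤ) (hF : IsFrobOf S F) (hFpos : 0 < F)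
    (I : Set ℤ) (hI : IsRelIdeal S I) (FI : ℤ) (hFI : IsFrobOf I FI) :
    IsAlmostCanonical S F I ↔
      subI (tilde I (F - FI)) (maxId S) = subI (stdK S F) (maxId S) :=
  stmt4_general S hS F hF I FI hFI
end

section
/- A numerical semigroup S is 2-AGL if and only if 2K = 3K and 2K \ K = {F(S) − x, F(S)} for some minimal generator x of S. -/
open Set Pointwise

/-!
Write `K` for the standard canonical ideal. Since `0 ∈ K`, the semigroup `⟨K⟩` equals `2K`
exactly when `2K = 3K`, which gives the backward direction. For the forward direction, `K ⊄ S`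
(otherwise `⟨K⟩ = K`), and any `u ∈ K \ S` gives `F = u + (F - u) ∈ 2K`, so `⟨K⟩ \ K = {a, F}`.
If `a ∉ 2K`, then `K ∪ {F}` is closed under addition, since everything above `F` lies in `S ⊆ K`;
so `⟨K⟩ ⊆ K ∪ {F}`, which is absurd. Hence `⟨K⟩ = 2K`, i.e. `2K = 3K`, and `x = F - a` lies in `S`.
If `x = s + t` with `s, t ∈ M`, then `a + s ∈ 2K \ K = {a, F}` forces `t = 0`, so `x` is a
minimal generator.
-/

theorem Set.exists_eq_pair_of_ncard_eq_two {α : Type*} {s : Set α} {b : α} (hs : s.ncard = 2)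
    (hb : b ∈ s) : ∃ a, a ≠ b ∧ s = {a, b} := by
  obtain ⟨x, y, hxy, rfl⟩ := Set.ncard_eq_two.1 hs
  rcases hb with rfl | rfl
  · exact ⟨y, hxy.symm, Set.pair_comm _ _⟩
  · exact ⟨x, hxy, rfl⟩

namespace AddSubmonoid

variable {M : Type*} [AddMonoid M]

theorem closure_subset_of_add_subset {K T : Set M} (hKT : K ⊆ T) (h0 : (0 : M) ∈ T)
    (hT : T + T ⊆ T) : (closure K : Set M) ⊆ T :=
  closure_le (S := ⟨⟨T, fun ha hb => hT (Set.add_mem_add ha hb)⟩, h0⟩).2 hKT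

theorem closure_eq_add_self_iff {K : Set M} (h0 : (0 : M) ∈ K) :
    (closure K : Set M) = K + K ↔ K + K + K = K + K := by
  have hK : K ⊆ closure K := subset_closure
  constructor
  · intro h
    refine subset_antisymm ?_ (Set.subset_add_left _ h0)
    rw [← h]
    exact add_subset (h ▸ add_subset hK hK) hK
  · intro h
    refine subset_antisymm (closure_subset_of_add_subset (Set.subset_add_right _ h0)
      (by simpa using Set.add_mem_add h0 h0) ?_) (add_subset_closure subset_rfl subset_rfl)
    rw [← add_assoc, h, h]

end AddSubmonoid

section CanonicalIdeal

variable {S : Set ℤ} {F : ℤ}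

theorem zero_mem_stdK (hF : F ∉ S) : (0 : ℤ) ∈ stdK S F :=
  ⟨le_rfl, by simpa using hF⟩

theorem self_notMem_stdK (h0 : (0 : ℤ) ∈ S) : F ∉ stdK S F :=
  fun h => h.2 (by simpa using h0)

theorem add_mem_stdK (hS : IsNumSgrp S) {k s : ℤ} (hk : k ∈ stdK S F) (hs : s ∈ S) :
    k + s ∈ stdK S F := by
  refine ⟨by linarith [hk.1, hS.2.2.1 s hs], fun h => hk.2 ?_⟩
  simpa only [sub_add_eq_sub_sub, sub_add_cancel] using hS.2.1 _ h _ hs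

theorem subset_stdK (hS : IsNumSgrp S) (hF : F ∉ S) : S ⊆ stdK S F :=
  fun s hs => by simpa using add_mem_stdK hS (zero_mem_stdK hF) hs

theorem mem_stdK_of_lt (hS : IsNumSgrp S) (hF : IsFrobOf S F) {z : ℤ} (hz : F < z) :
    z ∈ stdK S F :=
  subset_stdK hS hF.1 (hF.2 z hz)

theorem add_mem_add_stdK (hS : IsNumSgrp S) {w s : ℤ} (hw : w ∈ stdK S F + stdK S F)
    (hs : s ∈ S) : w + s ∈ stdK S F + stdK S F := by
  obtain ⟨a, ha, b, hb, rfl⟩ := hw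
  simpa only [add_assoc] using Set.add_mem_add ha (add_mem_stdK hS hb hs)

theorem nonneg_of_mem_add_stdK {w : ℤ} (hw : w ∈ stdK S F + stdK S F) : 0 ≤ w := by
  obtain ⟨a, ha, b, hb, rfl⟩ := hw
  exact add_nonneg ha.1 hb.1

theorem genK_subset_stdK_of_subset (hS : IsNumSgrp S) (hF : F ∉ S) (hKS : stdK S F ⊆ S) :
    genK S F ⊆ stdK S F :=
  AddSubmonoid.closure_subset_of_add_subset subset_rfl (zero_mem_stdK hF)
    (Set.add_subset_iff.2 fun a ha b hb => subset_stdK hS hF (hS.2.1 a (hKS ha) b (hKS hb)))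

theorem self_mem_add_stdK (hF : IsFrobOf S F) (hKS : ¬stdK S F ⊆ S) :
    F ∈ stdK S F + stdK S F := by
  obtain ⟨u, hu, huS⟩ := Set.not_subset.1 hKS
  have huF : u ≤ F := not_lt.1 fun h => huS (hF.2 u h)
  exact ⟨u, hu, F - u, ⟨by linarith, by simpa using huS⟩, by ring⟩

theorem genK_diff_stdK_subset_singleton (hS : IsNumSgrp S) (hF : IsFrobOf S F) (hF0 : 0 < F)
    (h : (stdK S F + stdK S F) \ stdK S F ⊆ {F}) : genK S F \ stdK S F ⊆ {F} := by
  have hF_add : ∀ k ∈ stdK S F, F + k ∈ stdK S F ∪ {F} := fun k hk => by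
    rcases hk.1.eq_or_lt with rfl | hk0
    · simp
    · exact Or.inl (mem_stdK_of_lt hS hF (by linarith))
  have hclosed : (stdK S F ∪ {F}) + (stdK S F ∪ {F}) ⊆ stdK S F ∪ {F} := by
    rintro _ ⟨a, ha | rfl, b, hb | rfl, rfl⟩
    · by_cases hab : a + b ∈ stdK S F
      · exact Or.inl hab
      · exact Or.inr (h ⟨Set.add_mem_add ha hb, hab⟩)
    · simpa only [add_comm a] using hF_add a ha
    · exact hF_add b hb
    · exact Or.inl (mem_stdK_of_lt hS hF (by linarith))
  have hgen := AddSubmonoid.closure_subset_of_add_subset Set.subset_union_left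
    (Or.inl (zero_mem_stdK hF.1)) hclosed
  exact fun z hz => (hgen hz.1).resolve_left hz.2

theorem genK_eq_add_stdK_of_diff_eq_pair (hS : IsNumSgrp S) (hF : IsFrobOf S F)
    (hF2K : F ∈ stdK S F + stdK S F) {a : ℤ} (haF : a ≠ F)
    (hpair : genK S F \ stdK S F = {a, F}) : genK S F = stdK S F + stdK S F := by
  have h2Kgen : stdK S F + stdK S F ⊆ genK S F :=
    AddSubmonoid.add_subset_closure subset_rfl subset_rfl
  have hF0 : 0 < F := (nonneg_of_mem_add_stdK hF2K).lt_of_ne fun h => hF.1 (h ▸ hS.1)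
  have ha2K : a ∈ stdK S F + stdK S F := by
    by_contra ha
    have hdiff : (stdK S F + stdK S F) \ stdK S F ⊆ {a, F} :=
      hpair ▸ Set.sdiff_subset_sdiff_left h2Kgen
    have hsub := genK_diff_stdK_subset_singleton hS hF hF0 fun z hz =>
      (hdiff hz).resolve_left fun hza => ha (hza ▸ hz.1)
    exact haF (hsub (hpair ▸ Or.inl rfl))
  refine subset_antisymm (fun z hz => ?_) h2Kgen
  by_cases hzK : z ∈ stdK S F
  · exact Set.subset_add_right _ (zero_mem_stdK hF.1) hzK
  · have hz' : z ∈ genK S F \ stdK S F := ⟨hz, hzK⟩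
    rw [hpair] at hz'
    rcases hz' with rfl | rfl
    exacts [ha2K, hF2K]

theorem isMinGen_sub_of_diff_eq_pair (hS : IsNumSgrp S) {a : ℤ} (haF : a ≠ F)
    (h : (stdK S F + stdK S F) \ stdK S F = {a, F}) : IsMinGen S (F - a) := by
  have ha : a ∈ (stdK S F + stdK S F) \ stdK S F := h ▸ Or.inl rfl
  have hFa : F - a ∈ S := by_contra fun hFa => ha.2 ⟨nonneg_of_mem_add_stdK ha.1, hFa⟩
  refine ⟨⟨hFa, sub_ne_zero.2 haF.symm⟩, ?_⟩
  rintro ⟨s, ⟨hs, hs0⟩, t, ⟨ht, ht0⟩, hst : s + t = F - a⟩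
  have has : a + s ∈ (stdK S F + stdK S F) \ stdK S F :=
    ⟨add_mem_add_stdK hS ha.1 hs, fun hK => hK.2 (by rwa [show F - (a + s) = t by linarith])⟩
  rw [h] at has
  simp only [Set.mem_insert_iff, Set.mem_singleton_iff] at has hs0 ht0
  omega

end CanonicalIdeal

theorem stmt8 (S : Set ℤ) (hS : IsNumSgrp S) (F : ℤ) (hF : IsFrobOf S F) :
    (genK S F \ stdK S F).ncard = 2 ↔
      (stdK S F + stdK S F = stdK S F + stdK S F + stdK S F ∧
       ∃ x : ℤ, IsMinGen S x ∧ (stdK S F + stdK S F) \ stdK S F = {F - x, F}) := by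
  have h0 : (0 : ℤ) ∈ stdK S F := zero_mem_stdK hF.1
  constructor
  · intro h2
    have hF2K : F ∈ stdK S F + stdK S F := self_mem_add_stdK hF fun hKS => by
      rw [Set.sdiff_eq_empty.2 (genK_subset_stdK_of_subset hS hF.1 hKS), Set.ncard_empty] at h2
      exact two_ne_zero h2.symm
    obtain ⟨a, haF, hpair⟩ := Set.exists_eq_pair_of_ncard_eq_two h2
      ⟨AddSubmonoid.add_subset_closure subset_rfl subset_rfl hF2K, self_notMem_stdK hS.1⟩
    have hgen := genK_eq_add_stdK_of_diff_eq_pair hS hF hF2K haF hpair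
    exact ⟨((AddSubmonoid.closure_eq_add_self_iff h0).1 hgen).symm, F - a,
      isMinGen_sub_of_diff_eq_pair hS haF (hgen ▸ hpair), by rwa [sub_sub_cancel, ← hgen]⟩
  · rintro ⟨h3, x, hx, hdiff⟩
    rw [genK, (AddSubmonoid.closure_eq_add_self_iff h0).2 h3.symm, hdiff]
    exact Set.ncard_pair (by simpa using hx.1.2)
end

section
/- Let S be a numerical semigroup with 2K \ K = {F(S) − x₁, …, F(S) − x_r, F(S)} where each x_i is a minimal generator. If x ∈ L(S) and F(S) − x ∉ PF(S), then x ∈ PF(S) and F(S) − x + x_i ∈ PF(S) for some i. -/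
open Set Pointwise

/-!
Since `F - x ∉ PF(S)` there is a largest `m ∈ M` with `F - x + m ∉ S`; maximality makes
`F - x + m` a pseudo-Frobenius number. Whenever `y, z ∉ S` and `y + z = F + s` with `s ∈ S`,
the element `F - s = (F - y) + (F - z)` lies in `2K \ K`, so a nonzero such `s` is one of the `x_i`.
Applied to `y = F - x + m`, `z = x` this shows `m ∈ X`; applied to `z = x + n` for `n ∈ M`
it would make `m + n` a minimal generator, which is absurd, so `x + n ∈ S` and `x ∈ PF(S)`.
-/

section NumericalSemigroup

variable {S : Set ℤ} {F : ℤ}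

theorem IsNumSgrp.pos_of_mem_maxId (hS : IsNumSgrp S) {m : ℤ} (hm : m ∈ maxId S) : 0 < m :=
  lt_of_le_of_ne (hS.2.2.1 m hm.1) (Ne.symm hm.2)

theorem IsNumSgrp.add_mem_maxId (hS : IsNumSgrp S) {m n : ℤ} (hm : m ∈ maxId S)
    (hn : n ∈ maxId S) : m + n ∈ maxId S :=
  ⟨hS.2.1 m hm.1 n hn.1, (add_pos (hS.pos_of_mem_maxId hm) (hS.pos_of_mem_maxId hn)).ne'⟩

theorem not_isMinGen_add {m n : ℤ} (hm : m ∈ maxId S) (hn : n ∈ maxId S) :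
    ¬IsMinGen S (m + n) :=
  fun h => h.2 (add_mem_add hm hn)

theorem IsFrobOf.le_of_notMem (hF : IsFrobOf S F) {z : ℤ} (hz : z ∉ S) : z ≤ F :=
  not_lt.1 fun h => hz (hF.2 z h)

theorem IsFrobOf.sub_mem_stdK (hF : IsFrobOf S F) {y : ℤ} (hy : y ∉ S) : F - y ∈ stdK S F :=
  ⟨sub_nonneg.2 (hF.le_of_notMem hy), by rwa [sub_sub_cancel]⟩

theorem sub_notMem_stdK {s : ℤ} (hs : s ∈ S) : F - s ∉ stdK S F :=
  fun h => h.2 (by rwa [sub_sub_cancel])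

theorem IsFrobOf.sub_mem_add_stdK_diff (hF : IsFrobOf S F) {y z s : ℤ} (hy : y ∉ S)
    (hz : z ∉ S) (hs : s ∈ S) (hsum : y + z = F + s) :
    F - s ∈ (stdK S F + stdK S F) \ stdK S F := by
  refine ⟨?_, sub_notMem_stdK hs⟩
  convert add_mem_add (hF.sub_mem_stdK hy) (hF.sub_mem_stdK hz) using 1
  linarith

theorem mem_of_sub_mem_add_stdK_diff {X : Finset ℤ}
    (h2K : (stdK S F + stdK S F) \ stdK S F = (fun x => F - x) '' (X : Set ℤ) ∪ {F})
    {s : ℤ} (hs : s ≠ 0) (h : F - s ∈ (stdK S F + stdK S F) \ stdK S F) : s ∈ X := by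
  rw [h2K] at h
  rcases h with ⟨t, ht, hts⟩ | hFs
  · rwa [← sub_right_injective hts]
  · exact absurd (sub_eq_self.1 hFs) hs

theorem IsFrobOf.exists_greatest_add_notMem (hF : IsFrobOf S F) {y : ℤ}
    (hy : y ∉ subI S (maxId S)) :
    ∃ m ∈ maxId S, y + m ∉ S ∧ ∀ n ∈ maxId S, y + n ∉ S → n ≤ m := by
  have hne : ∃ m, m ∈ maxId S ∧ y + m ∉ S := by simpa [subI] using hy
  have hbdd : ∃ b, ∀ n, n ∈ maxId S ∧ y + n ∉ S → n ≤ b :=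
    ⟨F - y, fun n hn => by linarith [hF.le_of_notMem hn.2]⟩
  obtain ⟨m, ⟨hm, hym⟩, hmax⟩ := Int.exists_greatest_of_bdd hbdd hne
  exact ⟨m, hm, hym, fun n hn hyn => hmax n ⟨hn, hyn⟩⟩

theorem IsNumSgrp.add_mem_PF_of_greatest (hS : IsNumSgrp S) {y m : ℤ} (hm : m ∈ maxId S)
    (hym : y + m ∉ S) (hmax : ∀ n ∈ maxId S, y + n ∉ S → n ≤ m) : y + m ∈ PF S S := by
  refine ⟨fun n hn => by_contra fun hymn => ?_, hym⟩
  have := hmax (m + n) (hS.add_mem_maxId hm hn) (by rwa [← add_assoc])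
  linarith [hS.pos_of_mem_maxId hn]

end NumericalSemigroup

theorem stmt15 (S : Set ℤ) (hS : IsNumSgrp S) (F : ℤ) (hF : IsFrobOf S F)
    (X : Finset ℤ) (hX : ∀ x ∈ X, IsMinGen S x)
    (h2K : (stdK S F + stdK S F) \ stdK S F = (fun x => F - x) '' (X : Set ℤ) ∪ {F})
    (x : ℤ) (hx : x ∈ stdK S F \ S) (hnot : F - x ∉ PF S S) :
    x ∈ PF S S ∧ ∃ xi ∈ X, F - x + xi ∈ PF S S := by
  obtain ⟨⟨-, hFx⟩, hxS⟩ := hx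
  obtain ⟨m, hm, hFxm, hmax⟩ := hF.exists_greatest_add_notMem fun h => hnot ⟨h, hFx⟩
  have hmX : m ∈ X := mem_of_sub_mem_add_stdK_diff h2K hm.2
    (hF.sub_mem_add_stdK_diff hFxm hxS hm.1 (by ring))
  refine ⟨⟨fun n hn => by_contra fun hxn => ?_, hxS⟩, m, hmX,
    hS.add_mem_PF_of_greatest hm hFxm hmax⟩
  have hmn := hS.add_mem_maxId hm hn
  have hmnX : m + n ∈ X := mem_of_sub_mem_add_stdK_diff h2K hmn.2
    (hF.sub_mem_add_stdK_diff hFxm hxn hmn.1 (by ring))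
  exact not_isMinGen_add hm hn (hX _ hmnX)
end

section
/- A numerical semigroup S is GAS if and only if M − e is an almost canonical ideal of the numerical semigroup M − M. -/
open Set Pointwise

/-! Write `K = stdK S F`, `M = maxId S` and `T = M - M`. Both sides are equivalent to
`{w | F - w ∉ T} ⊆ M - M(T)`. For almost canonicity, the defining equality is this inclusion
shifted by `F - F(T)`, together with the reverse inclusion, which always holds. For GAS: unless
`2K = K`, we always have `2K \ K = {F - x | x ∈ E} ∪ {F}`, where `E` is the set of `x ∈ M`
with `F - x ∈ 2K \ K` (it is empty when `2K = K`). The inclusion says exactly that the elements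
of `E` are minimal generators whose differences are not pseudo-Frobenius numbers. -/

lemma mem_maxId {S : Set ℤ} {x : ℤ} : x ∈ maxId S ↔ x ∈ S ∧ x ≠ 0 := Iff.rfl

lemma subI_tilde_image_sub (I J : Set ℤ) (e d : ℤ) :
    subI (tilde ((fun m => m - e) '' I) d) J = (· + (e - d)) ⁻¹' subI I J := by
  ext y
  simp only [subI, tilde, mem_preimage, image_image, mem_image]
  refine forall₂_congr fun j _ => ⟨?_, fun h => ⟨_, h, by ring⟩⟩
  rintro ⟨m, hm, hmy⟩
  convert hm using 1
  omega

lemma sub_add_notMem_subI {S : Set ℤ} {F x m : ℤ} (hx : F - x ∉ S) (hm : m ∈ maxId S) :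
    F - (x + m) ∉ subI (maxId S) (maxId S) := fun h => by
  have := (h m hm).1
  rw [sub_add_eq_sub_sub, sub_add_cancel] at this
  exact hx this

lemma mem_PF_of_mem_subI {S : Set ℤ} {t : ℤ} (ht : t ∈ subI (maxId S) (maxId S))
    (hts : t ∉ S) : t ∈ PF S S :=
  ⟨fun m hm => (ht m hm).1, hts⟩

namespace IsFrobOf

variable {I : Set ℤ} {a : ℤ}

lemma unique_s18 {b : ℤ} (ha : IsFrobOf I a) (hb : IsFrobOf I b) : a = b := by
  rcases lt_trichotomy a b with h | h | h
  · exact absurd (ha.2 b h) hb.1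
  · exact h
  · exact absurd (hb.2 a h) ha.1

lemma le_of_notMem_s18 {x : ℤ} (ha : IsFrobOf I a) (hx : x ∉ I) : x ≤ a :=
  not_lt.1 fun h => hx (ha.2 x h)

lemma mem_maxId_of_lt (ha : IsFrobOf I a) (ha0 : 0 ≤ a) {z : ℤ} (hz : a < z) : z ∈ maxId I :=
  mem_maxId.2 ⟨ha.2 z hz, by omega⟩

lemma mem_stdK_iff (ha : IsFrobOf I a) {x : ℤ} : x ∈ stdK I a ↔ a - x ∉ I :=
  ⟨And.right, fun h => ⟨by have := ha.le_of_notMem_s18 h; omega, h⟩⟩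

lemma zero_mem_stdK (ha : IsFrobOf I a) : (0 : ℤ) ∈ stdK I a :=
  ha.mem_stdK_iff.2 (by rw [sub_zero]; exact ha.1)

lemma image_sub {e : ℤ} (ha : IsFrobOf I a) (ha0 : 0 ≤ a) :
    IsFrobOf ((fun m => m - e) '' maxId I) (a - e) := by
  refine ⟨?_, fun z hz => ⟨z + e, ha.mem_maxId_of_lt ha0 (by omega), by ring⟩⟩
  rintro ⟨m, hm, hme⟩
  obtain rfl : m = a := by simp only at hme; omega
  exact ha.1 hm.1

lemma pos_of_mem_maxId_subI {S : Set ℤ} {F : ℤ} (hF : IsFrobOf S F) (hFpos : 0 < F) {t : ℤ}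
    (ht : t ∈ maxId (subI (maxId S) (maxId S))) : 0 < t := by
  obtain ⟨htT, ht0⟩ := mem_maxId.1 ht
  by_contra hneg
  have := (htT (F - t) (hF.mem_maxId_of_lt hFpos.le (by omega))).1
  rw [add_sub_cancel] at this
  exact hF.1 this

end IsFrobOf

namespace IsNumSgrp

variable {S : Set ℤ} {F : ℤ}

lemma pos_of_mem_maxId_s18 (hS : IsNumSgrp S) {x : ℤ} (hx : x ∈ maxId S) : 0 < x :=
  lt_of_le_of_ne (hS.2.2.1 x hx.1) (Ne.symm (mem_maxId.1 hx).2)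

lemma subset_subI (hS : IsNumSgrp S) : S ⊆ subI (maxId S) (maxId S) := fun s hs m hm =>
  mem_maxId.2 ⟨hS.2.1 s hs m hm.1, by
    have := hS.2.2.1 s hs; have := hS.pos_of_mem_maxId_s18 hm; omega⟩

lemma maxId_subset_maxId_subI (hS : IsNumSgrp S) :
    maxId S ⊆ maxId (subI (maxId S) (maxId S)) := fun _ hm =>
  mem_maxId.2 ⟨hS.subset_subI hm.1, (mem_maxId.1 hm).2⟩

lemma frob_mem_subI (hS : IsNumSgrp S) (hF : IsFrobOf S F) (hFpos : 0 < F) :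
    F ∈ subI (maxId S) (maxId S) := fun m hm =>
  hF.mem_maxId_of_lt hFpos.le (by have := hS.pos_of_mem_maxId_s18 hm; omega)

lemma PF_subset_maxId_subI (hS : IsNumSgrp S) (hF : IsFrobOf S F) (hFpos : 0 < F) :
    PF S S ⊆ maxId (subI (maxId S) (maxId S)) := by
  rintro f ⟨hfM, hfS⟩
  have hf0 : 0 ≤ f := by
    by_contra hneg
    have := hfM (F - f) (hF.mem_maxId_of_lt hFpos.le (by omega))
    rw [add_sub_cancel] at this
    exact hF.1 this
  have hf : f ≠ 0 := by rintro rfl; exact hfS hS.1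
  refine mem_maxId.2 ⟨fun m hm => mem_maxId.2 ⟨hfM m hm, ?_⟩, hf⟩
  have := hS.pos_of_mem_maxId_s18 hm
  omega

lemma frob_notMem_stdK (hS : IsNumSgrp S) : F ∉ stdK S F :=
  fun h => h.2 (by rw [sub_self]; exact hS.1)

lemma frob_mem_twoK (hS : IsNumSgrp S) (hF : IsFrobOf S F)
    (hK : ¬ stdK S F + stdK S F ⊆ stdK S F) : F ∈ stdK S F + stdK S F := by
  obtain ⟨_, ⟨a, ha, b, hb, rfl⟩, hab⟩ := not_subset.1 hK
  have hFab : F - (a + b) ∈ S := by_contra fun h => hab (hF.mem_stdK_iff.2 h)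
  have hbS : b ∉ S := fun hbS => ha.2 (by
    rw [show F - a = F - (a + b) + b by ring]; exact hS.2.1 _ hFab _ hbS)
  exact ⟨F - b, hF.mem_stdK_iff.2 (by rwa [sub_sub_cancel]), b, hb, by ring⟩

end IsNumSgrp

/-- The `x_i` in the definition of GAS: the `x ∈ M` with `F - x ∈ 2K \ K`. -/
def gasGens (S : Set ℤ) (F : ℤ) : Set ℤ :=
  {s | s ∈ maxId S ∧ ∃ x ∈ stdK S F, x + s ∉ S}

section

variable {S : Set ℤ} {F : ℤ}

lemma sub_mem_twoK_diff_of_mem_gasGens (hF : IsFrobOf S F) {s : ℤ} (hs : s ∈ gasGens S F) :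
    F - s ∈ (stdK S F + stdK S F) \ stdK S F := by
  obtain ⟨hsM, x, hx, hxs⟩ := hs
  refine ⟨⟨x, hx, F - s - x, hF.mem_stdK_iff.2 ?_, by ring⟩, fun h => h.2 ?_⟩
  · rwa [show F - (F - s - x) = x + s by ring]
  · rw [sub_sub_cancel]
    exact hsM.1

lemma twoK_diff_eq (hS : IsNumSgrp S) (hF : IsFrobOf S F)
    (hK : ¬ stdK S F + stdK S F ⊆ stdK S F) :
    (stdK S F + stdK S F) \ stdK S F = (fun x => F - x) '' gasGens S F ∪ {F} := by
  refine Subset.antisymm ?_ (union_subset ?_ ?_)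
  · rintro _ ⟨⟨a, ha, b, hb, rfl⟩, hab⟩
    have hFab : F - (a + b) ∈ S := by_contra fun h => hab (hF.mem_stdK_iff.2 h)
    by_cases hF' : a + b = F
    · exact Or.inr hF'
    refine Or.inl ⟨F - (a + b), ⟨mem_maxId.2 ⟨hFab, by omega⟩, a, ha, ?_⟩, by simp⟩
    rw [show a + (F - (a + b)) = F - b by ring]
    exact hb.2
  · rintro _ ⟨s, hs, rfl⟩
    exact sub_mem_twoK_diff_of_mem_gasGens hF hs
  · exact singleton_subset_iff.2 ⟨hS.frob_mem_twoK hF hK, hS.frob_notMem_stdK⟩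

lemma gasGens_finite (hS : IsNumSgrp S) (hF : IsFrobOf S F) : (gasGens S F).Finite := by
  refine (finite_Icc 0 F).subset fun s ⟨hsM, x, hx, hxs⟩ => ⟨hS.2.2.1 s hsM.1, ?_⟩
  have := hF.le_of_notMem_s18 hxs
  have := hx.1
  omega

lemma isGAS_iff (hS : IsNumSgrp S) (hF : IsFrobOf S F) :
    IsGAS S F ↔ (∀ s ∈ gasGens S F, IsMinGen S s) ∧
      ∀ s ∈ gasGens S F, ∀ s' ∈ gasGens S F, s - s' ∉ PF S S := by
  constructor
  · rintro (hK | ⟨X, hmin, hpf, hX⟩)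
    · have hG : ∀ s, s ∉ gasGens S F := fun s hs =>
        have hs' := sub_mem_twoK_diff_of_mem_gasGens hF hs
        hs'.2 (hK ▸ hs'.1)
      exact ⟨fun s hs => absurd hs (hG s), fun s hs => absurd hs (hG s)⟩
    · have hGX : ∀ s ∈ gasGens S F, s ∈ X := fun s hs => by
        rcases hX ▸ sub_mem_twoK_diff_of_mem_gasGens hF hs with ⟨s', hs', hss'⟩ | hs0
        · obtain rfl : s' = s := by simp only at hss'; omega
          exact hs'
        · exact absurd (by simpa using hs0) (mem_maxId.1 hs.1).2
      exact ⟨fun s hs => hmin s (hGX s hs), fun s hs s' hs' => hpf s (hGX s hs) s' (hGX s' hs')⟩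
  · rintro ⟨hmin, hpf⟩
    by_cases hK : stdK S F + stdK S F ⊆ stdK S F
    · exact Or.inl (hK.antisymm fun k hk => ⟨k, hk, 0, hF.zero_mem_stdK, add_zero k⟩)
    · refine Or.inr ⟨(gasGens_finite hS hF).toFinset, ?_, ?_, ?_⟩
      · simpa using hmin
      · simpa using hpf
      · rw [Finite.coe_toFinset]
        exact twoK_diff_eq hS hF hK

lemma forall_gasGens_iff_subset_subI (hS : IsNumSgrp S) (hF : IsFrobOf S F) (hFpos : 0 < F) :
    ((∀ s ∈ gasGens S F, IsMinGen S s) ∧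
      ∀ s ∈ gasGens S F, ∀ s' ∈ gasGens S F, s - s' ∉ PF S S) ↔
    {w | F - w ∉ subI (maxId S) (maxId S)} ⊆
      subI (maxId S) (maxId (subI (maxId S) (maxId S))) := by
  constructor
  · rintro ⟨hmin, hpf⟩ w hw t ht
    by_contra hwt
    have hw0 : 0 ≤ w := by have := hF.le_of_notMem_s18 fun h => hw (hS.subset_subI h); omega
    have ht0 := hF.pos_of_mem_maxId_subI hFpos ht
    have htT := (mem_maxId.1 ht).1
    have hwtS : w + t ∉ S := fun h => hwt (mem_maxId.2 ⟨h, by omega⟩)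
    obtain ⟨m, hm, hwm⟩ : ∃ m ∈ maxId S, F - w + m ∉ maxId S := by
      by_contra! h
      exact hw h
    have hwmS : F - w + m ∉ S := fun h => hwm (mem_maxId.2 ⟨h, fun h0 =>
      hwtS (hF.2 _ (by have := hS.pos_of_mem_maxId_s18 hm; omega))⟩)
    have hwS : w ∉ S := fun h => hwtS (by
      have hw' : w ≠ 0 := by rintro rfl; exact hw (by simpa using hS.frob_mem_subI hF hFpos)
      rw [add_comm]; exact (htT w (mem_maxId.2 ⟨h, hw'⟩)).1)
    -- `w - m` witnesses both `m ∈ E` and `t + m ∈ E`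
    have hx : w - m ∈ stdK S F :=
      hF.mem_stdK_iff.2 (by rwa [show F - (w - m) = F - w + m by ring])
    have hmG : m ∈ gasGens S F := ⟨hm, w - m, hx, by rwa [sub_add_cancel]⟩
    have htmG : t + m ∈ gasGens S F :=
      ⟨htT m hm, w - m, hx, by rwa [show w - m + (t + m) = w + t by ring]⟩
    by_cases htS : t ∈ S
    · exact (hmin _ htmG).2 ⟨t, mem_maxId.2 ⟨htS, ht0.ne'⟩, m, hm, rfl⟩
    · exact hpf _ htmG _ hmG (by rw [add_sub_cancel_right]; exact mem_PF_of_mem_subI htT htS)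
  · intro hC
    refine ⟨fun s ⟨hsM, x, hx, hxs⟩ => ⟨hsM, ?_⟩,
      fun s ⟨_, x, hx, hxs⟩ s' ⟨hs'M, _⟩ hf => ?_⟩
    · rintro ⟨m₁, hm₁, m₂, hm₂, rfl⟩
      have := hC (sub_add_notMem_subI hx.2 hm₁) m₂ (hS.maxId_subset_maxId_subI hm₂)
      exact hxs (by rw [← add_assoc]; exact this.1)
    · have := hC (sub_add_notMem_subI hx.2 hs'M) _ (hS.PF_subset_maxId_subI hF hFpos hf)
      exact hxs (by rw [show x + s = x + s' + (s - s') by ring]; exact this.1)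

lemma subI_maxId_eq_iff (hF : IsFrobOf S F) (hFpos : 0 < F) :
    subI (maxId S) (maxId (subI (maxId S) (maxId S))) =
        {w | F - w ∉ subI (maxId S) (maxId S)} ∪ {F} ↔
      {w | F - w ∉ subI (maxId S) (maxId S)} ⊆
        subI (maxId S) (maxId (subI (maxId S) (maxId S))) := by
  refine ⟨fun h => h ▸ subset_union_left,
    fun h => Subset.antisymm ?_ (union_subset h (singleton_subset_iff.2 fun t ht => ?_))⟩
  · intro w hw
    by_cases hwF : w = F
    · exact Or.inr hwF
    refine Or.inl fun hFw => hF.1 ?_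
    have := (hw (F - w) (mem_maxId.2 ⟨hFw, by omega⟩)).1
    rwa [add_sub_cancel] at this
  · exact hF.mem_maxId_of_lt hFpos.le (by have := hF.pos_of_mem_maxId_subI hFpos ht; omega)

lemma isAlmostCanonical_iff (hF : IsFrobOf S F) (hFpos : 0 < F) {FMM : ℤ}
    (hFMM : IsFrobOf (subI (maxId S) (maxId S)) FMM) (e : ℤ) :
    IsAlmostCanonical (subI (maxId S) (maxId S)) FMM ((fun m => m - e) '' maxId S) ↔
      subI (maxId S) (maxId (subI (maxId S) (maxId S))) =
        {w | F - w ∉ subI (maxId S) (maxId S)} ∪ {F} := by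
  have hI := hF.image_sub (e := e) hFpos.le
  have hK : stdK (subI (maxId S) (maxId S)) FMM ∪ {FMM} =
      (· + (F - FMM)) ⁻¹' ({w | F - w ∉ subI (maxId S) (maxId S)} ∪ {F}) := by
    ext y
    refine or_congr ?_ (by simp only [mem_singleton_iff]; omega)
    rw [hFMM.mem_stdK_iff, show FMM - y = F - (y + (F - FMM)) by ring]
    rfl
  calc _ ↔ subI (tilde ((fun m => m - e) '' maxId S) (FMM - (F - e)))
          (maxId (subI (maxId S) (maxId S))) = stdK (subI (maxId S) (maxId S)) FMM ∪ {FMM} :=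
        ⟨fun ⟨_, hFI, h⟩ => hFI.unique_s18 hI ▸ h, fun h => ⟨F - e, hI, h⟩⟩
    _ ↔ _ := by
      rw [subI_tilde_image_sub, show e - (FMM - (F - e)) = F - FMM by ring, hK]
      exact (preimage_injective.2 (add_right_surjective _)).eq_iff

end

theorem stmt18_general (S : Set ℤ) (hS : IsNumSgrp S) (F e : ℤ) (hF : IsFrobOf S F) (hFpos : 0 < F)
    (FMM : ℤ) (hFMM : IsFrobOf (subI (maxId S) (maxId S)) FMM) :
    IsGAS S F ↔
      IsAlmostCanonical (subI (maxId S) (maxId S)) FMM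
        ((fun m => m - e) '' maxId S) :=
  (isGAS_iff hS hF).trans <| (forall_gasGens_iff_subset_subI hS hF hFpos).trans <|
    (subI_maxId_eq_iff hF hFpos).symm.trans
      (isAlmostCanonical_iff hF hFpos hFMM e).symm

theorem stmt18 (S : Set ℤ) (hS : IsNumSgrp S) (F e : ℤ) (hF : IsFrobOf S F) (hFpos : 0 < F)
    (he : IsMult S e) (FMM : ℤ) (hFMM : IsFrobOf (subI (maxId S) (maxId S)) FMM) :
    IsGAS S F ↔
      IsAlmostCanonical (subI (maxId S) (maxId S)) FMM
        ((fun m => m - e) '' maxId S) :=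
  stmt18_general S hS F e hF hFpos FMM hFMM
end
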